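/- arXiv:2005.03749 — 2 statements merged into one kernel-verified Lean document; each statement's English description precedes it below -/
import Mathlib

section
/- Suppose Faulty(S, ·) factors through the public projection pubtr. If there exist a trace tr₁ (with honest voter) and a trace tr₂ (with honest authority, i.e., hon(S) ∈ tr₂) such that pubtr(tr₁) = pubtr(tr₂), tr₁ splits as l · r with Ballot(H, b) ∈ l and End ∈ r, and no split l' · r' of tr₁ has BBrec(bs) ∈ l' with b ∈ bs and End ∈ r', then it is impossible that both tr₁ ∈ TimelyP(S) and tr₂ ∈ AuthP(S). -/
variable {Signal Voter Ballot : Type}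

/-- The public projection of a trace. -/
def pubtr (isPublic : Signal → Bool) (tr : List Signal) : List Signal :=
  tr.filter isPublic

/-- `TimelyP(S)`. -/
def TimelyP (BallotSig : Voter → Ballot → Signal) (EndSig : Signal)
    (BBrec : List Ballot → Signal)
    (Faulty : Ballot → Set (List Signal)) : Set (List Signal) :=
  { tr | ∀ (H : Voter) (b : Ballot),
      (∃ l r, tr = l ++ r ∧ BallotSig H b ∈ l ∧ EndSig ∈ r) →
      (∃ l' r' bs, tr = l' ++ r' ∧ BBrec bs ∈ l' ∧ b ∈ bs ∧ EndSig ∈ r') ∨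
      tr ∈ Faulty b }

/-- `AuthP(S)`. -/
def AuthP (honS : Signal) (Faulty : Ballot → Set (List Signal)) :
    Set (List Signal) :=
  { tr | honS ∈ tr → ∀ b : Ballot, tr ∉ Faulty b }

/-- Core contradiction of the impossibility proofs: publicly
indistinguishable traces, one with an unrecorded honest ballot and one
with an honest authority, cannot both satisfy timeliness and
authority protection. -/
theorem impossibility_core
    (isPublic : Signal → Bool)
    (BallotSig : Voter → Ballot → Signal) (EndSig : Signal)
    (BBrec : List Ballot → Signal) (honS : Signal)
    (Faulty : Ballot → Set (List Signal))
    (hfactor : ∀ b : Ballot, ∃ F : Set (List Signal),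
      Faulty b = { tr | pubtr isPublic tr ∈ F })
    (tr₁ tr₂ : List Signal)
    (hhon₂ : honS ∈ tr₂)
    (hpub : pubtr isPublic tr₁ = pubtr isPublic tr₂)
    (H : Voter) (b : Ballot)
    (l r : List Signal)
    (hsplit : tr₁ = l ++ r) (hcast : BallotSig H b ∈ l) (hend : EndSig ∈ r)
    (hnorec : ¬ ∃ l' r' bs, tr₁ = l' ++ r' ∧ BBrec bs ∈ l' ∧ b ∈ bs ∧
      EndSig ∈ r') :
    ¬ (tr₁ ∈ TimelyP BallotSig EndSig BBrec Faulty ∧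
       tr₂ ∈ AuthP honS Faulty) := by
  rintro ⟨htim, hauth⟩
  have h := htim H b ⟨l, r, hsplit, hcast, hend⟩
  rcases h with h | h
  · exact hnorec h
  · obtain ⟨F, hF⟩ := hfactor b
    have h2 : tr₂ ∈ Faulty b := by
      rw [hF] at h ⊢
      show pubtr isPublic tr₂ ∈ F
      rw [← hpub]
      exact h
    exact hauth hhon₂ b h2
end

section
/- In a protocol without re-voting where abstaining voters send no messages, every trace satisfying Uniqueness(S) also satisfies VoterA(S): if verifyNoVote(H, ∅) is recorded for a voter H who sent no message, then either no recorded ballot b on the bulletin board satisfies castBy(b) = H, or there exists some ballot b' with the trace in Faulty(S, b'). -/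
variable {Signal Voter Agent Ballot Msg : Type}

/-- `Uniqueness(S)` (Definition 5): whenever the verdict is nonfaulty for
some ballot `b' ≠ ⊥` and the recorded ballots `bs` are published, every
recorded ballot was sent by a unique eligible voter, given by `castBy`. -/
def Uniqueness
    (BBrecSig : List Ballot → Signal) (BBHSig : List Voter → Signal)
    (sendSig : Voter → Agent → Msg → Signal)
    (castBy : Ballot → Voter) (sub : Msg → Ballot → Prop) (bot : Ballot)
    (Faulty : Ballot → Set (List Signal)) : Set (List Signal) :=
  { tr | ∀ b' : Ballot, b' ≠ bot → tr ∉ Faulty b' →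
      ∀ bs : List Ballot, BBrecSig bs ∈ tr →
      ∀ i j : Fin bs.length,
        ∃ (Hs : List Voter) (i' j' : Fin Hs.length) (A₁ A₂ : Agent)
          (m₁ m₂ : Msg),
          BBHSig Hs ∈ tr ∧
          castBy (bs.get i) = Hs.get i' ∧
          castBy (bs.get j) = Hs.get j' ∧
          sendSig (Hs.get i') A₁ m₁ ∈ tr ∧
          sendSig (Hs.get j') A₂ m₂ ∈ tr ∧
          sub m₁ (bs.get i) ∧ sub m₂ (bs.get j) ∧
          (i.val ≠ j.val → Hs.get i' ≠ Hs.get j') }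

/-- `VoterA(S)`: a voter who checked that no ballots beyond `b_H` are
recorded for him is protected. -/
def VoterA
    (BBrecSig : List Ballot → Signal)
    (verifyNoVoteSig : Voter → Set Ballot → Signal)
    (castBy : Ballot → Voter)
    (Faulty : Ballot → Set (List Signal)) : Set (List Signal) :=
  { tr | ∀ (H : Voter) (bH : Set Ballot), verifyNoVoteSig H bH ∈ tr →
      ¬ (∃ (bs : List Ballot) (b : Ballot),
          BBrecSig bs ∈ tr ∧ b ∈ bs ∧ castBy b = H ∧ b ∉ bH) ∨
      ∃ b' : Ballot, tr ∈ Faulty b' }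

/-- Theorem 2: in a protocol without re-voting where abstaining voters send
no messages, `Uniqueness(S)` implies `VoterA(S)`. -/
theorem uniqueness_implies_voterA
    (BBrecSig : List Ballot → Signal) (BBHSig : List Voter → Signal)
    (sendSig : Voter → Agent → Msg → Signal)
    (verifyNoVoteSig : Voter → Set Ballot → Signal)
    (castBy : Ballot → Voter) (sub : Msg → Ballot → Prop) (bot : Ballot)
    (Faulty : Ballot → Set (List Signal))
    (hballot : ∃ b : Ballot, b ≠ bot)
    (tr : List Signal)
    (hnorevote : ∀ (H : Voter) (bH : Set Ballot),
      verifyNoVoteSig H bH ∈ tr → bH = ∅)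
    (habstain : ∀ H : Voter, verifyNoVoteSig H ∅ ∈ tr →
      ∀ (A : Agent) (m : Msg), sendSig H A m ∉ tr)
    (huniq : tr ∈ Uniqueness BBrecSig BBHSig sendSig castBy sub bot Faulty) :
    tr ∈ VoterA BBrecSig verifyNoVoteSig castBy Faulty := by
  classical
  intro H bH hver
  by_cases hf : ∃ b' : Ballot, tr ∈ Faulty b'
  · exact Or.inr hf
  · left
    rintro ⟨bs, b, hbb, hmem, hcast, -⟩
    obtain ⟨b0, hb0⟩ := hballot
    obtain ⟨i, hi⟩ := List.get_of_mem hmem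
    obtain ⟨Hs, i', j', A₁, A₂, m₁, m₂, -, hci, -, hsend, -⟩ :=
      huniq b0 hb0 (fun h => hf ⟨b0, h⟩) bs hbb i i
    have hH : Hs.get i' = H := by rw [← hci, hi, hcast]
    have := habstain H (hnorevote H bH hver ▸ hver) A₁ m₁
    exact this (hH ▸ hsend)
end
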